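/- arXiv:math/0212294 — 2 statements merged into one kernel-verified Lean document; each statement's English description precedes it below -/
import Mathlib

section
/- (Universal Separation Theorem, part 2) Let V be a complete subsemimodule of a complete right K-semimodule X and x ∈ X. Then x ∈ V if and only if x\P_V(x) = x\x. -/
variable {K : Type*} [CompleteLattice K] [Monoid K]
variable {X : Type*} [CompleteLattice X]

/-- Residual of the action: x\y = ⊔ {l : K | x·l ≤ y}. -/
def lres (act : X → K → X) (x y : X) : K := sSup {l : K | act x l ≤ y}

/-- Canonical projector onto a sup-closed subset V: P_V(x) = ⊔ {v ∈ V | v ≤ x}. -/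
def proj (V : Set X) (x : X) : X := sSup {v : X | v ∈ V ∧ v ≤ x}

/-! If `x\P_V(x) = x\x`, then `x ≤ x·(x\x) = x·(x\P_V(x)) ≤ P_V(x) ≤ x`, so `x` is its own
projection and hence lies in `V`. -/

theorem proj_le (V : Set X) (x : X) : proj V x ≤ x :=
  sSup_le fun _ hv => hv.2

section Projection

variable {V : Set X}

theorem proj_mem (hVsup : ∀ U : Set X, U ⊆ V → sSup U ∈ V) (x : X) : proj V x ∈ V :=
  hVsup _ fun _ hv => hv.1

theorem proj_eq_self_of_mem {x : X} (hx : x ∈ V) : proj V x = x :=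
  le_antisymm (proj_le V x) (le_sSup ⟨hx, le_rfl⟩)

theorem proj_eq_self_iff (hVsup : ∀ U : Set X, U ⊆ V → sSup U ∈ V) {x : X} :
    proj V x = x ↔ x ∈ V :=
  ⟨fun h => h ▸ proj_mem hVsup x, proj_eq_self_of_mem⟩

end Projection

section Residual

omit [Monoid K]

variable {act : X → K → X}
  (hsupS : ∀ (x : X) (S : Set K), act x (sSup S) = ⨆ a ∈ S, act x a)
include hsupS

theorem act_lres_le (x y : X) : act x (lres act x y) ≤ y := by
  rw [lres, hsupS]
  exact iSup₂_le fun _ hl => hl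

theorem act_le_act_lres {x y : X} {l : K} (hl : act x l ≤ y) :
    act x l ≤ act x (lres act x y) := by
  rw [lres, hsupS]
  exact le_biSup (act x) hl

end Residual

theorem universal_separation_mem_general
    (act : X → K → X)
    (hone : ∀ x : X, act x 1 = x)
    (hsupS : ∀ (x : X) (S : Set K), act x (sSup S) = ⨆ a ∈ S, act x a)
    (V : Set X)
    (hVsup : ∀ U : Set X, U ⊆ V → sSup U ∈ V)
    (x : X) :
    x ∈ V ↔ lres act x (proj V x) = lres act x x := by
  refine ⟨fun hx => by rw [proj_eq_self_of_mem hx], fun h => ?_⟩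
  have hx_le_proj : x ≤ proj V x :=
    calc x = act x 1 := (hone x).symm
      _ ≤ act x (lres act x x) := act_le_act_lres hsupS (by rw [hone])
      _ = act x (lres act x (proj V x)) := by rw [h]
      _ ≤ proj V x := act_lres_le hsupS x (proj V x)
  exact (proj_eq_self_iff hVsup).1 (le_antisymm (proj_le V x) hx_le_proj)

/-- Universal Separation Theorem, part 2: x ∈ V ⟺ x\P_V(x) = x\x. -/
theorem universal_separation_mem
    (act : X → K → X)
    (hKl : ∀ (a : K) (S : Set K), a * sSup S = ⨆ b ∈ S, a * b)
    (hKr : ∀ (a : K) (S : Set K), sSup S * a = ⨆ b ∈ S, b * a)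
    (hassoc : ∀ (x : X) (a b : K), act (act x a) b = act x (a * b))
    (hone : ∀ x : X, act x 1 = x)
    (hsupS : ∀ (x : X) (S : Set K), act x (sSup S) = ⨆ a ∈ S, act x a)
    (hsupV : ∀ (U : Set X) (a : K), act (sSup U) a = ⨆ x ∈ U, act x a)
    (V : Set X)
    (hVsup : ∀ U : Set X, U ⊆ V → sSup U ∈ V)
    (hVact : ∀ v ∈ V, ∀ a : K, act v a ∈ V)
    (x : X) :
    x ∈ V ↔ lres act x (proj V x) = lres act x x :=
  universal_separation_mem_general act hone hsupS V hVsup x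
end

section
/- (Separation of Points) Let X be a complete right K-semimodule over a complete idempotent semiring K. If x, y ∈ X satisfy x\z = y\z for all z ∈ X, then x = y. -/
/-! Since `a ↦ x·a` preserves arbitrary suprema, `x\·` is its upper adjoint, so with `x·1 = x`
we get `1 ≤ x\y ↔ x ≤ y`. Taking `z = x` and `z = y` in `x\z = y\z` yields both inequalities. -/

variable {K : Type*} [CompleteLattice K] [Monoid K]
variable {X : Type*} [CompleteLattice X]

section SSupPreserving

variable {α β : Type*} [CompleteLattice α] [CompleteLattice β] {f : α → β}

theorem monotone_of_map_sSup (hf : ∀ s : Set α, f (sSup s) = ⨆ a ∈ s, f a) : Monotone f :=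
  fun a b hab => by
    rw [← sup_eq_right.mpr hab, ← sSup_pair, hf, iSup_insert, iSup_singleton]
    exact le_sup_left

theorem map_sSup_setOf_map_le (hf : ∀ s : Set α, f (sSup s) = ⨆ a ∈ s, f a) (z : β) :
    f (sSup {a | f a ≤ z}) ≤ z := by
  rw [hf]
  exact iSup₂_le fun _ ha => ha

theorem gc_sSup_setOf_map_le (hf : ∀ s : Set α, f (sSup s) = ⨆ a ∈ s, f a) :
    GaloisConnection f (fun z => sSup {a | f a ≤ z}) := fun _ z =>
  ⟨fun h => le_sSup h,
    fun h => (monotone_of_map_sSup hf h).trans (map_sSup_setOf_map_le hf z)⟩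

end SSupPreserving

theorem one_le_lres_iff {act : X → K → X}
    (hsupS : ∀ (x : X) (S : Set K), act x (sSup S) = ⨆ a ∈ S, act x a)
    (hone : ∀ x : X, act x 1 = x) (x y : X) : 1 ≤ lres act x y ↔ x ≤ y := by
  rw [lres, ← (gc_sSup_setOf_map_le (hsupS x)).le_iff_le, hone]

theorem separation_of_points_general
    (act : X → K → X)
    (hone : ∀ x : X, act x 1 = x)
    (hsupS : ∀ (x : X) (S : Set K), act x (sSup S) = ⨆ a ∈ S, act x a)
    (x y : X)
    (h : ∀ z : X, lres act x z = lres act y z) :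
    x = y := by
  have hself (w : X) : 1 ≤ lres act w w := (one_le_lres_iff hsupS hone w w).2 le_rfl
  apply le_antisymm
  · rw [← one_le_lres_iff hsupS hone, h]
    exact hself y
  · rw [← one_le_lres_iff hsupS hone, ← h]
    exact hself x

/-- Separation of points: if x\z = y\z for all z then x = y. -/
theorem separation_of_points
    (act : X → K → X)
    (hKl : ∀ (a : K) (S : Set K), a * sSup S = ⨆ b ∈ S, a * b)
    (hKr : ∀ (a : K) (S : Set K), sSup S * a = ⨆ b ∈ S, b * a)
    (hassoc : ∀ (x : X) (a b : K), act (act x a) b = act x (a * b))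
    (hone : ∀ x : X, act x 1 = x)
    (hsupS : ∀ (x : X) (S : Set K), act x (sSup S) = ⨆ a ∈ S, act x a)
    (hsupV : ∀ (U : Set X) (a : K), act (sSup U) a = ⨆ x ∈ U, act x a)
    (x y : X)
    (h : ∀ z : X, lres act x z = lres act y z) :
    x = y :=
  separation_of_points_general act hone hsupS x y h
end
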